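/- Let 𝔤_n = 𝔤_{r_1,…,r_m} with n = ∑_{j=1}^m r_j ≥ 2 odd cycles C_1,…,C_n, where C_i has length 2k_i + 1, and label the edges x_{i,j} (1 ≤ i ≤ n, 1 ≤ j ≤ 2k_i+1) as described. Then the toric ideal I_{𝔤_n} ⊆ K[x_{i,j}] is generated by the binomials (∏_{s=0}^{k_i} x_{i,2s+1})(∏_{t=1}^{k_j} x_{j,2t}) − (∏_{s=1}^{k_i} x_{i,2s})(∏_{t=0}^{k_j} x_{j,2t+1}) for 1 ≤ i < j ≤ n. -/

import Mathlib

open Polynomial MvPolynomial Finset CategoryTheory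



namespace OddCycleComp

/-! ## The graph `𝔤_{r_1,…,r_m}` : `n` odd cycles sharing a single common vertex.
Cycle `i` (for `i : Fin n`) has length `2 * k i + 1`.  The common vertex is `none`;
the vertex `u_i^{(j)}` (`1 ≤ j ≤ 2 k_i`) is `some ⟨i, j-1⟩`.  The edge `x_{i,j}`
(`1 ≤ j ≤ 2 k_i + 1`) is encoded as `⟨i, j-1⟩`. -/

/-- The vertex set of the graph. -/
abbrev Vtx (n : ℕ) (k : Fin n → ℕ) : Type := Option (Σ i : Fin n, Fin (2 * k i))

/-- The (labels of the) edges of the graph: `⟨i, j⟩` is the edge `x_{i,j+1}` of the paper. -/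
abbrev Edg (n : ℕ) (k : Fin n → ℕ) : Type := Σ i : Fin n, Fin (2 * k i + 1)

variable {n : ℕ} {k : Fin n → ℕ}

/-- First endpoint of the edge `x_{i,j}`: `u` if `j = 1`, else `u_i^{(j-1)}`. -/
def endpt1 (e : Edg n k) : Vtx n k :=
  if h : (e.2 : ℕ) = 0 then none
  else some ⟨e.1, ⟨(e.2 : ℕ) - 1, by have := e.2.isLt; omega⟩⟩

/-- Second endpoint of the edge `x_{i,j}`: `u` if `j = 2 k_i + 1`, else `u_i^{(j)}`. -/
def endpt2 (e : Edg n k) : Vtx n k :=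
  if h : (e.2 : ℕ) = 2 * k e.1 then none
  else some ⟨e.1, ⟨(e.2 : ℕ), by have := e.2.isLt; omega⟩⟩

/-- The edge `x_{i,j}` as an unordered pair of vertices. -/
def edgeSym2 (e : Edg n k) : Sym2 (Vtx n k) := s(endpt1 e, endpt2 e)

/-- The graph `𝔤` consisting of the `n` odd cycles sharing the common vertex `none`. -/
def cycGraph (n : ℕ) (k : Fin n → ℕ) : SimpleGraph (Vtx n k) :=
  SimpleGraph.fromEdgeSet (Set.range (edgeSym2 (n := n) (k := k)))

variable (K : Type*) [Field K]

/-- The `K`-algebra map sending each edge variable to the product of its endpoints. -/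
noncomputable def phi (n : ℕ) (k : Fin n → ℕ) :
    MvPolynomial (Edg n k) K →ₐ[K] MvPolynomial (Vtx n k) K :=
  MvPolynomial.aeval fun e => X (endpt1 e) * X (endpt2 e)

/-- The toric ideal `I_𝔤`, i.e. the kernel of `phi`. -/
noncomputable def toricIdeal (n : ℕ) (k : Fin n → ℕ) : Ideal (MvPolynomial (Edg n k) K) :=
  RingHom.ker (phi K n k)

/-- The edge ring `K[𝔤] ≅ K[x_{i,j}]/I_𝔤`. -/
abbrev EdgeRing (n : ℕ) (k : Fin n → ℕ) := MvPolynomial (Edg n k) K ⧸ toricIdeal K n k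

/-! ## Hilbert series and `h`-polynomials -/

/-- The Hilbert function of `S/I`: the `K`-dimension of the image of the space of
degree-`d` homogeneous polynomials in the quotient (for a homogeneous ideal this is the
dimension of the degree-`d` graded piece of `S/I`). -/
noncomputable def hilbertFun {σ : Type*} (I : Ideal (MvPolynomial σ K)) (d : ℕ) : ℕ :=
  Module.finrank K
    ((MvPolynomial.homogeneousSubmodule σ K d).map (Ideal.Quotient.mkₐ K I).toLinearMap)

/-- `IsHPolyOf hf P` says `P` is *the* `h`-polynomial of a ring with Hilbert function `hf`:
the Hilbert series equals `P(t)/(1-t)^d` for some `d`, and `P(1) ≠ 0`.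
(By the Hilbert–Serre theorem, `d` is then the Krull dimension, and `P` is unique.) -/
def IsHPolyOf (hf : ℕ → ℕ) (P : Polynomial ℤ) : Prop :=
  P.eval 1 ≠ 0 ∧ ∃ d : ℕ,
    (PowerSeries.mk fun i => (hf i : ℤ)) * (1 - PowerSeries.X) ^ d
      = PowerSeries.mk fun i => P.coeff i

/-- The `h`-polynomial formula `∏ (1+⋯+t^j)^{r_j} - t ∏ (1+⋯+t^{j-1})^{r_j}`
(here the index `j : Fin m` stands for the paper's `j = (j : ℕ) + 1 ∈ {1,…,m}`). -/
noncomputable def hFormula (m : ℕ) (r : Fin m → ℕ) : Polynomial ℤ :=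
  (∏ j : Fin m, (∑ i ∈ Finset.range ((j : ℕ) + 2), (Polynomial.X : Polynomial ℤ) ^ i) ^ r j)
    - Polynomial.X *
      ∏ j : Fin m, (∑ i ∈ Finset.range ((j : ℕ) + 1), (Polynomial.X : Polynomial ℤ) ^ i) ^ r j

/-! ## The binomial generators of the toric ideal -/

/-- `∏_{s=0}^{k_i} x_{i,2s+1}`, the product of the odd-labelled edges of cycle `i`. -/
noncomputable def oddProd (n : ℕ) (k : Fin n → ℕ) (i : Fin n) : MvPolynomial (Edg n k) K :=
  ∏ s : Fin (k i + 1), X ⟨i, ⟨2 * (s : ℕ), by have := s.isLt; omega⟩⟩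

/-- `∏_{t=1}^{k_i} x_{i,2t}`, the product of the even-labelled edges of cycle `i`. -/
noncomputable def evenProd (n : ℕ) (k : Fin n → ℕ) (i : Fin n) : MvPolynomial (Edg n k) K :=
  ∏ t : Fin (k i), X ⟨i, ⟨2 * (t : ℕ) + 1, by have := t.isLt; omega⟩⟩

/-- The binomial `(∏_{s=0}^{k_i} x_{i,2s+1})(∏_{t=1}^{k_j} x_{j,2t})
 - (∏_{s=1}^{k_i} x_{i,2s})(∏_{t=0}^{k_j} x_{j,2t+1})`. -/
noncomputable def cycBinomial (n : ℕ) (k : Fin n → ℕ) (i j : Fin n) :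
    MvPolynomial (Edg n k) K :=
  oddProd K n k i * evenProd K n k j - evenProd K n k i * oddProd K n k j

end OddCycleComp



namespace OddCycleComp

variable {n : ℕ} {k : Fin n → ℕ}
variable (K : Type*) [Field K]

/-! ## The graded lexicographic order and initial ideals -/

/-- Global rank of the edge variable `x_{i,j}`: the variables are ordered
`x_{1,1} ≻ x_{1,2} ≻ ⋯ ≻ x_{n,2k_n+1}`, with smaller rank = larger variable. -/
def rankVar (e : Edg n k) : ℕ :=
  (∑ i ∈ Finset.univ.filter (fun i : Fin n => i < e.1), (2 * k i + 1)) + (e.2 : ℕ)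

/-- The graded lexicographic order on exponent vectors induced by the above variable order:
`a ≺ b` iff `deg a < deg b`, or degrees agree and at the most significant variable where they
differ, `b` has the larger exponent. -/
def GrlexLT (a b : Edg n k →₀ ℕ) : Prop :=
  (a.sum fun _ x => x) < (b.sum fun _ x => x) ∨
    ((a.sum fun _ x => x) = (b.sum fun _ x => x) ∧
      ∃ e, a e < b e ∧ ∀ e', rankVar e' < rankVar e → a e' = b e')

/-- `u` is the exponent vector of the leading monomial of `p` w.r.t. grlex. -/
def IsLeadMonomial (p : MvPolynomial (Edg n k) K) (u : Edg n k →₀ ℕ) : Prop :=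
  u ∈ p.support ∧ ∀ v ∈ p.support, v ≠ u → GrlexLT v u

/-- The initial ideal of `I` w.r.t. the grlex order: the ideal generated by the leading
monomials of the nonzero elements of `I`. -/
noncomputable def initialIdeal (n : ℕ) (k : Fin n → ℕ) (I : Ideal (MvPolynomial (Edg n k) K)) :
    Ideal (MvPolynomial (Edg n k) K) :=
  Ideal.span {q | ∃ p ∈ I, ∃ u, IsLeadMonomial K p u ∧ q = monomial u (1 : K)}

/-- `G` is a Gröbner basis of `I` w.r.t. the grlex order. -/
def IsGroebnerBasis (n : ℕ) (k : Fin n → ℕ) (I : Ideal (MvPolynomial (Edg n k) K))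
    (G : Set (MvPolynomial (Edg n k) K)) : Prop :=
  G ⊆ (I : Set (MvPolynomial (Edg n k) K)) ∧
    initialIdeal K n k I =
      Ideal.span {q | ∃ g ∈ G, ∃ u, IsLeadMonomial K g u ∧ q = monomial u (1 : K)}

end OddCycleComp



namespace OddCycleComp

variable (K : Type*) [Field K]

/-! ## Depth, Cohen–Macaulay type, (almost) Gorenstein -/

/-- `Ext^i_R(R/𝔪, R)` as an `R`-module. -/
noncomputable def extRes (R : Type*) [CommRing R] (𝔪 : Ideal R) (i : ℕ) : ModuleCat R :=
  (((Ext R (ModuleCat R) i).obj (Opposite.op (ModuleCat.of R (R ⧸ 𝔪)))).obj (ModuleCat.of R R))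

/-- The depth of `R` w.r.t. `𝔪`: the least `i` with `Ext^i_R(R/𝔪, R) ≠ 0`. -/
noncomputable def depthOf (R : Type*) [CommRing R] (𝔪 : Ideal R) : ℕ :=
  sInf {i | Nontrivial (extRes R 𝔪 i)}

/-- The Krull dimension of `R`, as a natural number. -/
noncomputable def krullDimNat (R : Type*) [CommRing R] : ℕ :=
  ((ringKrullDim R).unbotD 0).untopD 0

/-- A (graded) ring `R` with irrelevant maximal ideal `𝔪` is Cohen–Macaulay
iff `depth_𝔪 R = dim R`. -/
def IsCMOf (R : Type*) [CommRing R] (𝔪 : Ideal R) : Prop :=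
  depthOf R 𝔪 = krullDimNat R

/-- The Cohen–Macaulay type of `R`: `dim_K Ext^depth_R(R/𝔪, R)`, which for a Cohen–Macaulay
graded ring is the minimal number of generators of the canonical module. -/
noncomputable def cmType (R : Type*) [CommRing R] [Algebra K R] (𝔪 : Ideal R) : ℕ :=
  letI : Module K (extRes R 𝔪 (depthOf R 𝔪)) :=
    Module.compHom (extRes R 𝔪 (depthOf R 𝔪)) (algebraMap K R)
  Module.finrank K (extRes R 𝔪 (depthOf R 𝔪))

/-- The irrelevant maximal ideal of the standard graded quotient `K[x]/I`. -/
noncomputable def irrelevantIdeal {σ : Type*} (I : Ideal (MvPolynomial σ K)) :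
    Ideal (MvPolynomial σ K ⧸ I) :=
  (Ideal.span (Set.range (X : σ → MvPolynomial σ K))).map (Ideal.Quotient.mk I)

/-- The Cohen–Macaulay type of the standard graded algebra `K[x]/I`. -/
noncomputable def cmTypeQuot {σ : Type*} (I : Ideal (MvPolynomial σ K)) : ℕ :=
  cmType K (MvPolynomial σ K ⧸ I) (irrelevantIdeal K I)

/-- `ẽ(R) = ∑_{i=0}^{s} ((h_s + ⋯ + h_{s-i}) - (h_0 + ⋯ + h_i))`, computed from the
`h`-polynomial `P` with `h`-vector `(h_0, …, h_s)`, `s = deg P`. -/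
noncomputable def tildeE (P : Polynomial ℤ) : ℤ :=
  ∑ i ∈ Finset.range (P.natDegree + 1),
    ((∑ l ∈ Finset.range (i + 1), P.coeff (P.natDegree - l)) -
      ∑ l ∈ Finset.range (i + 1), P.coeff l)

end OddCycleComp


namespace OddCycleComp

section SR

variable (K : Type*) [Field K]

/-- `O_i`, the set of odd-labelled edges `{x_{i,1}, x_{i,3}, …, x_{i,2k_i+1}}` of cycle `i`. -/
def Oset (n : ℕ) (k : Fin n → ℕ) (i : Fin n) : Finset (Edg n k) :=
  Finset.univ.image fun s : Fin (k i + 1) =>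
    (⟨i, ⟨2 * (s : ℕ), by have := s.isLt; omega⟩⟩ : Edg n k)

/-- `E_i`, the set of even-labelled edges `{x_{i,2}, x_{i,4}, …, x_{i,2k_i}}` of cycle `i`. -/
def Eset (n : ℕ) (k : Fin n → ℕ) (i : Fin n) : Finset (Edg n k) :=
  Finset.univ.image fun t : Fin (k i) =>
    (⟨i, ⟨2 * (t : ℕ) + 1, by have := t.isLt; omega⟩⟩ : Edg n k)

/-- The Stanley–Reisner complex `Δ_𝔤` of the initial ideal of the toric ideal:
the faces are the sets of edges whose product does not lie in `in_≺(I_𝔤)`. -/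
noncomputable def SRComplex (n : ℕ) (k : Fin n → ℕ) : Set (Finset (Edg n k)) :=
  {A | (∏ e ∈ A, (X e : MvPolynomial (Edg n k) K)) ∉ initialIdeal K n k (toricIdeal K n k)}

/-- A facet: a maximal face of a simplicial complex (given as its set of faces). -/
def IsFacet {α : Type*} (Δ : Set (Finset α)) (A : Finset α) : Prop :=
  A ∈ Δ ∧ ∀ B ∈ Δ, A ⊆ B → B = A

/-- The set `O_n ∪ E_1` of "suppressed" edges, lying in every facet of `Δ_𝔤`. -/
def suppressedSet (n : ℕ) (k : Fin n → ℕ) (hn : 0 < n) : Finset (Edg n k) :=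
  Oset n k ⟨n - 1, by omega⟩ ∪ Eset n k ⟨0, hn⟩

/-- The Stanley–Reisner complex `Δ_𝔤` written "suppressing the elements of `O_n ∪ E_1`":
the faces `A` disjoint from `O_n ∪ E_1` with `A ∪ O_n ∪ E_1 ∈ Δ_𝔤`
(i.e. the link of `O_n ∪ E_1`). -/
noncomputable def SRreduced (n : ℕ) (k : Fin n → ℕ) (hn : 0 < n) : Set (Finset (Edg n k)) :=
  {A | A ∩ suppressedSet n k hn = ∅ ∧ (A ∪ suppressedSet n k hn) ∈ SRComplex K n k}

/-- The join `Δ * X` of a simplicial complex and (the simplex on) a vertex set `X`: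
its faces are the unions of a face of `Δ` and a subset of `X`, so its facets are `F ∪ X`
for `F` a facet of `Δ`. -/
def joinSet {α : Type*} [DecidableEq α] (Δ : Set (Finset α)) (Xs : Finset α) :
    Set (Finset α) :=
  {C | ∃ A ∈ Δ, ∃ B ⊆ Xs, C = A ∪ B}

/-- Relabelling of the edges of a graph of odd cycles into a graph with (weakly) longer
cycles: `x_{i,j} ↦ x_{i,j}`. -/
def embSame (n : ℕ) (k₁ k₂ : Fin n → ℕ) (h : ∀ i, k₁ i ≤ k₂ i) : Edg n k₁ ↪ Edg n k₂ where
  toFun e := ⟨e.1, ⟨(e.2 : ℕ), by have := e.2.isLt; have := h e.1; omega⟩⟩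
  inj' := by
    rintro ⟨i, j⟩ ⟨i', j'⟩ hh
    obtain ⟨rfl, h2⟩ := Sigma.mk.inj_iff.mp hh
    simp only [heq_eq_eq, Fin.mk.injEq] at h2
    exact Sigma.ext rfl (heq_of_eq (Fin.ext h2))

/-- Relabelling of the edges of the graph `𝔤'' = 𝔤' \ C_1'` into the edges of a graph with
one more cycle: `x_{i,j} ↦ x_{i+1,j}`. -/
def embSucc (nn : ℕ) (k₁ : Fin nn → ℕ) (k₂ : Fin (nn + 1) → ℕ)
    (h : ∀ i : Fin nn, k₁ i = k₂ i.succ) : Edg nn k₁ ↪ Edg (nn + 1) k₂ where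
  toFun e := ⟨e.1.succ, ⟨(e.2 : ℕ), by have := e.2.isLt; have := h e.1; omega⟩⟩
  inj' := by
    rintro ⟨i, j⟩ ⟨i', j'⟩ hh
    obtain ⟨h1, h2⟩ := Sigma.mk.inj_iff.mp hh
    have : i = i' := Fin.succ_injective _ h1
    subst this
    simp only [heq_eq_eq, Fin.mk.injEq] at h2
    exact Sigma.ext rfl (heq_of_eq (Fin.ext h2))

end SR

end OddCycleComp


namespace OddCycleComp

section Walks

variable {n : ℕ} {k : Fin n → ℕ} (K : Type*) [Field K]

/-- Recover the label of an edge from the corresponding pair of vertices. -/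
noncomputable def labelOf (n : ℕ) (k : Fin n → ℕ) (hn : 0 < n) (hk : ∀ i, 1 ≤ k i)
    (s : Sym2 (Vtx n k)) : Edg n k :=
  letI : Nonempty (Edg n k) := ⟨⟨⟨0, hn⟩, ⟨0, by omega⟩⟩⟩
  Function.invFun (edgeSym2 (n := n) (k := k)) s

/-- The list of edge labels traversed by a walk in `𝔤`. -/
noncomputable def walkLabels (hn : 0 < n) (hk : ∀ i, 1 ≤ k i) {v : Vtx n k}
    (w : (cycGraph n k).Walk v v) : List (Edg n k) :=
  w.edges.map (labelOf n k hn hk)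

/-- `f_Γ^{(+)}`: the product of the odd-numbered (first, third, …) edges of a closed walk. -/
noncomputable def fPlus (hn : 0 < n) (hk : ∀ i, 1 ≤ k i) {v : Vtx n k}
    (w : (cycGraph n k).Walk v v) : MvPolynomial (Edg n k) K :=
  (((walkLabels hn hk w).zipIdx.filter fun p => Even p.2).map fun p => (X p.1 :
    MvPolynomial (Edg n k) K)).prod

/-- `f_Γ^{(-)}`: the product of the even-numbered (second, fourth, …) edges of a closed walk. -/
noncomputable def fMinus (hn : 0 < n) (hk : ∀ i, 1 ≤ k i) {v : Vtx n k}
    (w : (cycGraph n k).Walk v v) : MvPolynomial (Edg n k) K :=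
  (((walkLabels hn hk w).zipIdx.filter fun p => ¬ Even p.2).map fun p => (X p.1 :
    MvPolynomial (Edg n k) K)).prod

/-- A closed even walk `Γ` is primitive if there is no closed even walk `Γ'` with
`f_{Γ'} ≠ f_Γ`, `f_{Γ'}^{(+)} ∣ f_Γ^{(+)}` and `f_{Γ'}^{(-)} ∣ f_Γ^{(-)}`. -/
def IsPrimitiveWalk (hn : 0 < n) (hk : ∀ i, 1 ≤ k i) {v : Vtx n k}
    (w : (cycGraph n k).Walk v v) : Prop :=
  ∀ (v' : Vtx n k) (w' : (cycGraph n k).Walk v' v'), 0 < w'.length → Even w'.length →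
    fPlus K hn hk w' ∣ fPlus K hn hk w → fMinus K hn hk w' ∣ fMinus K hn hk w →
    fPlus K hn hk w' - fMinus K hn hk w' = fPlus K hn hk w - fMinus K hn hk w

/-- All the (labels of the) edges of cycle `i`. -/
def cycleEdges (n : ℕ) (k : Fin n → ℕ) (i : Fin n) : Finset (Edg n k) :=
  Finset.univ.image fun j : Fin (2 * k i + 1) => (⟨i, j⟩ : Edg n k)

end Walks

/-- The odd-cycle condition: any two vertex-disjoint odd cycles are joined by an edge. -/
def OddCycleCondition {V : Type*} (G : SimpleGraph V) : Prop :=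
  ∀ (a b : V) (A : G.Walk a a) (B : G.Walk b b), A.IsCycle → B.IsCycle →
    Odd A.length → Odd B.length → (∀ x ∈ A.support, x ∉ B.support) →
    ∃ x ∈ A.support, ∃ y ∈ B.support, G.Adj x y

end OddCycleComp


namespace OddCycleComp

variable (K : Type*) [Field K]

/-- `K[x]/I` is almost Gorenstein: via Higashitani's criterion (equivalent to the
Goto–Takahashi–Taniguchi definition for Cohen–Macaulay homogeneous domains),
`type(R) - 1 = ẽ(R)`, where `ẽ` is computed from the `h`-vector. -/
def IsAlmostGorensteinQuot {σ : Type*} (I : Ideal (MvPolynomial σ K)) : Prop :=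
  ∃ P : Polynomial ℤ, IsHPolyOf (hilbertFun K I) P ∧ (cmTypeQuot K I : ℤ) - 1 = tildeE P

/-- `K[x]/I` is Gorenstein: by Stanley's theorem, for a Cohen–Macaulay homogeneous domain
this is equivalent to the symmetry of the `h`-vector. -/
def IsGorensteinQuot {σ : Type*} (I : Ideal (MvPolynomial σ K)) : Prop :=
  ∃ P : Polynomial ℤ, IsHPolyOf (hilbertFun K I) P ∧
    ∀ i ≤ P.natDegree, P.coeff i = P.coeff (P.natDegree - i)

end OddCycleComp


namespace OddCycleComp
section Proof

variable {n : ℕ} {k : Fin n → ℕ}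

lemma sigExt {F : Fin n → ℕ} {e e' : Σ i : Fin n, Fin (F i)}
    (h1 : e.1 = e'.1) (h2 : (e.2 : ℕ) = (e'.2 : ℕ)) : e = e' := by
  rcases e with ⟨i, j⟩; rcases e' with ⟨i', j'⟩
  dsimp at h1 h2; subst h1
  exact Sigma.ext rfl (heq_of_eq (Fin.ext h2))

lemma sigEq_iff {F : Fin n → ℕ} {e e' : Σ i : Fin n, Fin (F i)} :
    e = e' ↔ e.1 = e'.1 ∧ (e.2 : ℕ) = (e'.2 : ℕ) := by
  constructor
  · rintro rfl; exact ⟨rfl, rfl⟩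
  · rintro ⟨h1, h2⟩; exact sigExt h1 h2

lemma endpt1_eq_none_iff (e : Edg n k) : endpt1 e = none ↔ (e.2 : ℕ) = 0 := by
  rw [endpt1]; split_ifs with h <;> simp [h]

lemma endpt2_eq_none_iff (e : Edg n k) : endpt2 e = none ↔ (e.2 : ℕ) = 2 * k e.1 := by
  rw [endpt2]; split_ifs with h <;> simp [h]

lemma endpt1_eq_some_iff (e : Edg n k) (i : Fin n) (j0 : ℕ) (h : j0 < 2 * k i) :
    endpt1 e = some ⟨i, ⟨j0, h⟩⟩ ↔ e = ⟨i, ⟨j0 + 1, by omega⟩⟩ := by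
  rw [endpt1]
  split_ifs with hz
  · constructor
    · intro hc; exact absurd hc (by simp)
    · intro hc
      rw [sigEq_iff] at hc
      dsimp at hc
      omega
  · rw [Option.some_inj, sigEq_iff, sigEq_iff]
    dsimp
    omega

lemma endpt2_eq_some_iff (e : Edg n k) (i : Fin n) (j0 : ℕ) (h : j0 < 2 * k i) :
    endpt2 e = some ⟨i, ⟨j0, h⟩⟩ ↔ e = ⟨i, ⟨j0, by omega⟩⟩ := by
  rw [endpt2]
  split_ifs with hz
  · constructor
    · intro hc; exact absurd hc (by simp)
    · intro hc
      rw [sigEq_iff] at hc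
      obtain ⟨h1, h2⟩ := hc
      dsimp at h1 h2
      subst h1
      omega
  · rw [Option.some_inj, sigEq_iff, sigEq_iff]

/-- The additive map on exponent vectors induced by `phi`. -/
noncomputable def Amap (u : Edg n k →₀ ℕ) : Vtx n k →₀ ℕ :=
  ∑ e : Edg n k, u e • (Finsupp.single (endpt1 e) 1 + Finsupp.single (endpt2 e) 1)

lemma Amap_add (u v : Edg n k →₀ ℕ) : Amap (u + v) = Amap u + Amap v := by
  rw [Amap, Amap, Amap, ← Finset.sum_add_distrib]
  refine Finset.sum_congr rfl fun e _ => ?_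
  rw [Finsupp.add_apply, add_smul]

lemma Amap_apply (u : Edg n k →₀ ℕ) (v : Vtx n k) :
    Amap u v = ∑ e : Edg n k,
      u e * ((if endpt1 e = v then 1 else 0) + (if endpt2 e = v then 1 else 0)) := by
  classical
  rw [Amap, Finsupp.finset_sum_apply]
  refine Finset.sum_congr rfl fun e _ => ?_
  rw [Finsupp.smul_apply, Finsupp.add_apply, Finsupp.single_apply, Finsupp.single_apply,
    smul_eq_mul]

lemma Amap_mid (u : Edg n k →₀ ℕ) (i : Fin n) (j0 : ℕ) (h : j0 < 2 * k i) :
    Amap u (some ⟨i, ⟨j0, h⟩⟩) =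
      u ⟨i, ⟨j0, by omega⟩⟩ + u ⟨i, ⟨j0 + 1, by omega⟩⟩ := by
  classical
  rw [Amap_apply]
  simp only [mul_add]
  rw [Finset.sum_add_distrib]
  have h1 : (∑ e : Edg n k, u e * (if endpt1 e = some ⟨i, ⟨j0, h⟩⟩ then 1 else 0))
      = u ⟨i, ⟨j0 + 1, by omega⟩⟩ := by
    rw [Finset.sum_eq_single (⟨i, ⟨j0 + 1, by omega⟩⟩ : Edg n k)]
    · rw [if_pos ((endpt1_eq_some_iff _ i j0 h).2 rfl), mul_one]
    · intro e _ hne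
      rw [if_neg fun hc => hne ((endpt1_eq_some_iff e i j0 h).1 hc), mul_zero]
    · intro habs; exact absurd (Finset.mem_univ _) habs
  have h2 : (∑ e : Edg n k, u e * (if endpt2 e = some ⟨i, ⟨j0, h⟩⟩ then 1 else 0))
      = u ⟨i, ⟨j0, by omega⟩⟩ := by
    rw [Finset.sum_eq_single (⟨i, ⟨j0, by omega⟩⟩ : Edg n k)]
    · rw [if_pos ((endpt2_eq_some_iff _ i j0 h).2 rfl), mul_one]
    · intro e _ hne
      rw [if_neg fun hc => hne ((endpt2_eq_some_iff e i j0 h).1 hc), mul_zero]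
    · intro habs; exact absurd (Finset.mem_univ _) habs
  rw [h1, h2]
  omega

lemma Amap_none (u : Edg n k →₀ ℕ) :
    Amap u none = ∑ i : Fin n,
      (u ⟨i, ⟨0, by omega⟩⟩ + u ⟨i, ⟨2 * k i, by omega⟩⟩) := by
  classical
  rw [Amap_apply, ← Finset.univ_sigma_univ, Finset.sum_sigma]
  refine Finset.sum_congr rfl fun i _ => ?_
  simp only [mul_add]
  rw [Finset.sum_add_distrib]
  have h1 : (∑ j : Fin (2 * k i + 1),
      u ⟨i, j⟩ * (if endpt1 ⟨i, j⟩ = none then 1 else 0)) = u ⟨i, ⟨0, by omega⟩⟩ := by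
    rw [Finset.sum_eq_single (⟨0, by omega⟩ : Fin (2 * k i + 1))]
    · rw [if_pos ((endpt1_eq_none_iff _).2 rfl), mul_one]
    · intro j _ hne
      rw [if_neg, mul_zero]
      intro hc
      rw [endpt1_eq_none_iff] at hc
      exact hne (Fin.ext hc)
    · intro habs; exact absurd (Finset.mem_univ _) habs
  have h2 : (∑ j : Fin (2 * k i + 1),
      u ⟨i, j⟩ * (if endpt2 ⟨i, j⟩ = none then 1 else 0)) = u ⟨i, ⟨2 * k i, by omega⟩⟩ := by
    rw [Finset.sum_eq_single (⟨2 * k i, by omega⟩ : Fin (2 * k i + 1))]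
    · rw [if_pos ((endpt2_eq_none_iff _).2 rfl), mul_one]
    · intro j _ hne
      rw [if_neg, mul_zero]
      intro hc
      rw [endpt2_eq_none_iff] at hc
      exact hne (Fin.ext hc)
    · intro habs; exact absurd (Finset.mem_univ _) habs
  rw [h1, h2]


/-- Exponent vector of `oddProd`. -/
noncomputable def oddExp (n : ℕ) (k : Fin n → ℕ) (i : Fin n) : Edg n k →₀ ℕ :=
  ∑ s : Fin (k i + 1),
    Finsupp.single ⟨i, ⟨2 * (s : ℕ), by have := s.isLt; omega⟩⟩ 1

/-- Exponent vector of `evenProd`. -/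
noncomputable def evenExp (n : ℕ) (k : Fin n → ℕ) (i : Fin n) : Edg n k →₀ ℕ :=
  ∑ t : Fin (k i),
    Finsupp.single ⟨i, ⟨2 * (t : ℕ) + 1, by have := t.isLt; omega⟩⟩ 1

lemma oddExp_apply (i : Fin n) (x : Edg n k) :
    oddExp n k i x = if x.1 = i ∧ (x.2 : ℕ) % 2 = 0 then 1 else 0 := by
  classical
  rw [oddExp, Finsupp.finset_sum_apply]
  simp only [Finsupp.single_apply]
  by_cases hc : x.1 = i ∧ (x.2 : ℕ) % 2 = 0
  · rw [if_pos hc]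
    obtain ⟨h1, h2⟩ := hc
    rcases x with ⟨i', j⟩
    dsimp at h1 h2
    subst h1
    have hj := j.isLt
    have hlt : (j : ℕ) / 2 < k i' + 1 := by omega
    rw [Finset.sum_eq_single (⟨(j : ℕ) / 2, hlt⟩ : Fin (k i' + 1))]
    · split_ifs with hcond
      · rfl
      · refine absurd (show (⟨i', ⟨2 * ((j : ℕ) / 2), by omega⟩⟩ : Edg n k) = ⟨i', j⟩
          from sigExt rfl (by dsimp; omega)) hcond
    · intro s _ hne
      rw [if_neg]
      intro hc2
      rw [sigEq_iff] at hc2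
      dsimp at hc2
      exact hne (Fin.ext (by dsimp; omega))
    · intro habs; exact absurd (Finset.mem_univ _) habs
  · rw [if_neg hc]
    refine Finset.sum_eq_zero fun s _ => ?_
    rw [if_neg]
    intro hc2
    rw [sigEq_iff] at hc2
    dsimp at hc2
    exact hc ⟨hc2.1.symm, by omega⟩

lemma evenExp_apply (i : Fin n) (x : Edg n k) :
    evenExp n k i x = if x.1 = i ∧ (x.2 : ℕ) % 2 = 1 then 1 else 0 := by
  classical
  rw [evenExp, Finsupp.finset_sum_apply]
  simp only [Finsupp.single_apply]
  by_cases hc : x.1 = i ∧ (x.2 : ℕ) % 2 = 1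
  · rw [if_pos hc]
    obtain ⟨h1, h2⟩ := hc
    rcases x with ⟨i', j⟩
    dsimp at h1 h2
    subst h1
    have hj := j.isLt
    have hlt : ((j : ℕ) - 1) / 2 < k i' := by omega
    rw [Finset.sum_eq_single (⟨((j : ℕ) - 1) / 2, hlt⟩ : Fin (k i'))]
    · split_ifs with hcond
      · rfl
      · refine absurd (show (⟨i', ⟨2 * (((j : ℕ) - 1) / 2) + 1, by omega⟩⟩ : Edg n k) = ⟨i', j⟩
          from sigExt rfl (by dsimp; omega)) hcond
    · intro s _ hne
      rw [if_neg]
      intro hc2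
      rw [sigEq_iff] at hc2
      dsimp at hc2
      exact hne (Fin.ext (by dsimp; omega))
    · intro habs; exact absurd (Finset.mem_univ _) habs
  · rw [if_neg hc]
    refine Finset.sum_eq_zero fun s _ => ?_
    rw [if_neg]
    intro hc2
    rw [sigEq_iff] at hc2
    dsimp at hc2
    exact hc ⟨hc2.1.symm, by omega⟩

lemma oddExp_pair (i0 : Fin n) (a b : ℕ) (ha : a < 2 * k i0 + 1)
    (hb : b < 2 * k i0 + 1) (hab : b = a + 1) (i : Fin n) :
    oddExp n k i ⟨i0, ⟨a, ha⟩⟩ + oddExp n k i ⟨i0, ⟨b, hb⟩⟩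
      = if i0 = i then 1 else 0 := by
  rw [oddExp_apply, oddExp_apply]
  dsimp
  by_cases hi : i0 = i
  · simp only [hi, true_and, if_pos]
    split_ifs <;> omega
  · simp [hi]

lemma evenExp_pair (i0 : Fin n) (a b : ℕ) (ha : a < 2 * k i0 + 1)
    (hb : b < 2 * k i0 + 1) (hab : b = a + 1) (i : Fin n) :
    evenExp n k i ⟨i0, ⟨a, ha⟩⟩ + evenExp n k i ⟨i0, ⟨b, hb⟩⟩
      = if i0 = i then 1 else 0 := by
  rw [evenExp_apply, evenExp_apply]
  dsimp
  by_cases hi : i0 = i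
  · simp only [hi, true_and, if_pos]
    split_ifs <;> omega
  · simp [hi]

lemma Amap_swap (p q : Fin n) :
    Amap (oddExp n k p + evenExp n k q) = Amap (evenExp n k p + oddExp n k q) := by
  classical
  ext v
  match v with
  | none =>
      rw [Amap_none, Amap_none]
      simp only [Finsupp.add_apply, oddExp_apply, evenExp_apply]
      norm_num [Nat.mul_mod_right, Finset.sum_add_distrib, Finset.sum_ite_eq']
  | some ⟨i, j0⟩ =>
      have hj := j0.isLt
      have hv : (some ⟨i, j0⟩ : Vtx n k) = some ⟨i, ⟨(j0 : ℕ), hj⟩⟩ := rfl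
      rw [hv, Amap_mid _ i _ hj, Amap_mid _ i _ hj]
      simp only [Finsupp.add_apply]
      have hOp := oddExp_pair (k := k) i (j0 : ℕ) ((j0 : ℕ) + 1) (by omega) (by omega) rfl p
      have hEp := evenExp_pair (k := k) i (j0 : ℕ) ((j0 : ℕ) + 1) (by omega) (by omega) rfl p
      have hOq := oddExp_pair (k := k) i (j0 : ℕ) ((j0 : ℕ) + 1) (by omega) (by omega) rfl q
      have hEq := evenExp_pair (k := k) i (j0 : ℕ) ((j0 : ℕ) + 1) (by omega) (by omega) rfl q
      split_ifs at hOp hEp hOq hEq <;> omega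

lemma prod_monomial {σ : Type*} {ι : Type*} (K : Type*) [Field K] (s : Finset ι)
    (g : ι → (σ →₀ ℕ)) :
    (∏ e ∈ s, MvPolynomial.monomial (g e) (1 : K)) =
      MvPolynomial.monomial (∑ e ∈ s, g e) 1 := by
  classical
  induction s using Finset.cons_induction with
  | empty => simp
  | cons a s ha ih =>
      rw [Finset.prod_cons, Finset.sum_cons, ih, MvPolynomial.monomial_mul, one_mul]

variable (K : Type*) [Field K]

lemma phi_monomial (u : Edg n k →₀ ℕ) (c : K) :
    phi K n k (MvPolynomial.monomial u c) = MvPolynomial.monomial (Amap u) c := by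
  rw [phi, MvPolynomial.aeval_monomial]
  have he : ∀ e : Edg n k,
      ((X (endpt1 e) * X (endpt2 e) : MvPolynomial (Vtx n k) K)) ^ (u e)
        = MvPolynomial.monomial
            (u e • (Finsupp.single (endpt1 e) 1 + Finsupp.single (endpt2 e) 1)) 1 := by
    intro e
    rw [MvPolynomial.X, MvPolynomial.X, MvPolynomial.monomial_mul, one_mul,
      MvPolynomial.monomial_pow, one_pow]
  have hprod : u.prod
      (fun e m => (X (endpt1 e) * X (endpt2 e) : MvPolynomial (Vtx n k) K) ^ m)
        = MvPolynomial.monomial (Amap u) 1 := by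
    rw [Finsupp.prod]
    simp_rw [he]
    rw [prod_monomial]
    have hsum : (∑ e ∈ u.support,
        u e • (Finsupp.single (endpt1 e) 1 + Finsupp.single (endpt2 e) 1))
          = Amap u := by
      rw [Amap]
      exact Finset.sum_subset (Finset.subset_univ _) fun e _ hne => by
        rw [Finsupp.notMem_support_iff.mp hne, zero_smul]
    rw [hsum]
  rw [hprod, MvPolynomial.algebraMap_eq, MvPolynomial.C_mul_monomial, mul_one]

lemma oddProd_eq (i : Fin n) :
    oddProd K n k i = MvPolynomial.monomial (oddExp n k i) 1 := by
  rw [oddProd, oddExp, ← prod_monomial]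
  rfl

lemma evenProd_eq (i : Fin n) :
    evenProd K n k i = MvPolynomial.monomial (evenExp n k i) 1 := by
  rw [evenProd, evenExp, ← prod_monomial]
  rfl

lemma phi_cycBinomial (i j : Fin n) : phi K n k (cycBinomial K n k i j) = 0 := by
  have h := Amap_swap (n := n) (k := k) i j
  rw [Amap_add, Amap_add] at h
  rw [cycBinomial, map_sub, map_mul, map_mul, oddProd_eq, evenProd_eq, oddProd_eq,
    evenProd_eq, phi_monomial, phi_monomial, phi_monomial, phi_monomial,
    MvPolynomial.monomial_mul, MvPolynomial.monomial_mul, h, sub_self]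

lemma span_le_ker :
    Ideal.span {f | ∃ i j : Fin n, i < j ∧ f = cycBinomial K n k i j}
      ≤ RingHom.ker (phi K n k) := by
  rw [Ideal.span_le]
  rintro f ⟨i, j, hij, rfl⟩
  exact RingHom.mem_ker.mpr (phi_cycBinomial K i j)

lemma altern (a b : Edg n k →₀ ℕ) (hab : Amap a = Amap b) (i : Fin n) :
    ∀ (j : ℕ) (h : j < 2 * k i + 1),
      ((a ⟨i, ⟨j, h⟩⟩ : ℤ) - b ⟨i, ⟨j, h⟩⟩)
        = (-1) ^ j * ((a ⟨i, ⟨0, by omega⟩⟩ : ℤ) - b ⟨i, ⟨0, by omega⟩⟩) := by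
  intro j
  induction j with
  | zero => intro h; rw [pow_zero, one_mul]
  | succ m ihm =>
    intro h
    have hm : m < 2 * k i := by omega
    have hv := congrArg (fun w : Vtx n k →₀ ℕ => w (some ⟨i, ⟨m, hm⟩⟩)) hab
    rw [Amap_mid a i m hm, Amap_mid b i m hm] at hv
    have hvz := congrArg (Nat.cast : ℕ → ℤ) hv
    push_cast at hvz
    have ih2 := ihm (by omega)
    have hstep : ((a ⟨i, ⟨m + 1, h⟩⟩ : ℤ) - b ⟨i, ⟨m + 1, h⟩⟩)
        = -(((a ⟨i, ⟨m, by omega⟩⟩ : ℤ)) - b ⟨i, ⟨m, by omega⟩⟩) := by linarith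
    rw [hstep, ih2]
    ring

lemma sumD_zero (a b : Edg n k →₀ ℕ) (hab : Amap a = Amap b) :
    (∑ i : Fin n, ((a ⟨i, ⟨0, by omega⟩⟩ : ℤ) - b ⟨i, ⟨0, by omega⟩⟩)) = 0 := by
  have hv := congrArg (fun w : Vtx n k →₀ ℕ => w none) hab
  rw [Amap_none, Amap_none] at hv
  have hvz := congrArg (Nat.cast : ℕ → ℤ) hv
  push_cast at hvz
  have hl : ∀ i : Fin n,
      ((a ⟨i, ⟨2 * k i, by omega⟩⟩ : ℤ) - b ⟨i, ⟨2 * k i, by omega⟩⟩)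
        = (a ⟨i, ⟨0, by omega⟩⟩ : ℤ) - b ⟨i, ⟨0, by omega⟩⟩ := by
    intro i
    rw [altern a b hab i (2 * k i) (by omega)]
    rw [pow_mul]
    norm_num
  have h2 : (∑ i : Fin n,
      (((a ⟨i, ⟨0, by omega⟩⟩ : ℤ) + a ⟨i, ⟨2 * k i, by omega⟩⟩)
        - ((b ⟨i, ⟨0, by omega⟩⟩ : ℤ) + b ⟨i, ⟨2 * k i, by omega⟩⟩))) = 0 := by
    rw [Finset.sum_sub_distrib, hvz, sub_self]
  have h3 : (∑ i : Fin n,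
      (2 * ((a ⟨i, ⟨0, by omega⟩⟩ : ℤ) - b ⟨i, ⟨0, by omega⟩⟩))) = 0 := by
    refine Eq.trans (Finset.sum_congr rfl fun i _ => ?_) h2
    have := hl i
    linarith
  rw [← Finset.mul_sum] at h3
  linarith

lemma eq_of_D_eq (a b : Edg n k →₀ ℕ) (hab : Amap a = Amap b)
    (h0 : ∀ i : Fin n, (a ⟨i, ⟨0, by omega⟩⟩ : ℤ) = b ⟨i, ⟨0, by omega⟩⟩) : a = b := by
  ext x
  rcases x with ⟨i, j⟩
  have h := altern a b hab i (j : ℕ) j.isLt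
  simp only [Fin.eta] at h
  have h0i := h0 i
  rw [show ((a ⟨i, ⟨0, by omega⟩⟩ : ℤ)) = b ⟨i, ⟨0, by omega⟩⟩ from h0i, sub_self,
    mul_zero] at h
  omega

lemma exists_pos_neg (f : Fin n → ℤ) (hsum : (∑ i : Fin n, f i) = 0) (p0 : Fin n)
    (hp : f p0 ≠ 0) : ∃ p q : Fin n, p ≠ q ∧ 0 < f p ∧ f q < 0 := by
  have hpos : ∃ p, 0 < f p := by
    by_contra hno
    push_neg at hno
    rcases lt_or_gt_of_ne hp with hneg | hpos
    · have : (∑ i : Fin n, f i) < ∑ i : Fin n, (0 : ℤ) :=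
        Finset.sum_lt_sum (fun i _ => hno i) ⟨p0, Finset.mem_univ p0, hneg⟩
      rw [Finset.sum_const_zero] at this
      omega
    · exact absurd hpos (not_lt.mpr (hno p0))
  have hneg : ∃ q, f q < 0 := by
    by_contra hno
    push_neg at hno
    obtain ⟨p, hp2⟩ := hpos
    have : (∑ i : Fin n, (0 : ℤ)) < ∑ i : Fin n, f i :=
      Finset.sum_lt_sum (fun i _ => hno i) ⟨p, Finset.mem_univ p, hp2⟩
    rw [Finset.sum_const_zero] at this
    omega
  obtain ⟨p, hp2⟩ := hpos
  obtain ⟨q, hq2⟩ := hneg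
  exact ⟨p, q, fun hc => by rw [hc] at hp2; omega, hp2, hq2⟩

lemma binom_mem : ∀ (M : ℕ) (a b : Edg n k →₀ ℕ), Amap a = Amap b →
    (∑ i : Fin n, ((a ⟨i, ⟨0, by omega⟩⟩ : ℤ) - b ⟨i, ⟨0, by omega⟩⟩).natAbs) ≤ M →
    (MvPolynomial.monomial a (1 : K) - MvPolynomial.monomial b 1)
      ∈ Ideal.span {f | ∃ i j : Fin n, i < j ∧ f = cycBinomial K n k i j} := by
  intro M
  induction M with
  | zero =>
      intro a b hab hM
      have h0 : ∀ i : Fin n, (a ⟨i, ⟨0, by omega⟩⟩ : ℤ) = b ⟨i, ⟨0, by omega⟩⟩ := by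
        intro i
        have h1 : (∑ i : Fin n,
            ((a ⟨i, ⟨0, by omega⟩⟩ : ℤ) - b ⟨i, ⟨0, by omega⟩⟩).natAbs) = 0 := by omega
        have h2 := Finset.sum_eq_zero_iff.mp h1 i (Finset.mem_univ i)
        omega
      rw [eq_of_D_eq a b hab h0, sub_self]
      exact Ideal.zero_mem _
  | succ M ih =>
      intro a b hab hM
      by_cases h0 : ∀ i : Fin n, (a ⟨i, ⟨0, by omega⟩⟩ : ℤ) = b ⟨i, ⟨0, by omega⟩⟩
      · rw [eq_of_D_eq a b hab h0, sub_self]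
        exact Ideal.zero_mem _
      push_neg at h0
      obtain ⟨p0, hp0⟩ := h0
      obtain ⟨p, q, hpq, hDp, hDq⟩ :=
        exists_pos_neg (fun i => (a ⟨i, ⟨0, by omega⟩⟩ : ℤ) - b ⟨i, ⟨0, by omega⟩⟩)
          (sumD_zero a b hab) p0 (sub_ne_zero.mpr hp0)
      simp only at hDp hDq
      -- h1 : oddExp p + evenExp q ≤ a
      have h1 : oddExp n k p + evenExp n k q ≤ a := by
        rw [Finsupp.le_def]
        intro x
        rw [Finsupp.add_apply, oddExp_apply, evenExp_apply]
        rcases x with ⟨i, j⟩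
        have halt := altern a b hab i (j : ℕ) j.isLt
        simp only [Fin.eta] at halt
        by_cases hpar : (j : ℕ) % 2 = 0
        · rw [if_neg (show ¬(i = q ∧ (j : ℕ) % 2 = 1)
            from fun hc2 => by omega)]
          by_cases hip : i = p
          · rw [if_pos (show i = p ∧ (j : ℕ) % 2 = 0 from ⟨hip, hpar⟩)]
            rw [Even.neg_one_pow (Nat.even_iff.mpr hpar), one_mul] at halt
            subst hip
            omega
          · rw [if_neg (show ¬(i = p ∧ (j : ℕ) % 2 = 0) from fun hc2 => hip hc2.1)]
            omega
        · rw [if_neg (show ¬(i = p ∧ (j : ℕ) % 2 = 0) from fun hc2 => hpar hc2.2)]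
          by_cases hiq : i = q
          · rw [if_pos (show i = q ∧ (j : ℕ) % 2 = 1 from ⟨hiq, by omega⟩)]
            rw [Odd.neg_one_pow (Nat.odd_iff.mpr (by omega)), neg_one_mul] at halt
            subst hiq
            omega
          · rw [if_neg (show ¬(i = q ∧ (j : ℕ) % 2 = 1) from fun hc2 => hiq hc2.1)]
            omega
      have hc : (a - (oddExp n k p + evenExp n k q)) + (oddExp n k p + evenExp n k q) = a :=
        tsub_add_cancel_of_le h1
      have hAa' : Amap ((a - (oddExp n k p + evenExp n k q))
          + (evenExp n k p + oddExp n k q)) = Amap b := by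
        rw [Amap_add, ← Amap_swap p q, ← Amap_add, hc, hab]
      have hg : (oddProd K n k p * evenProd K n k q - evenProd K n k p * oddProd K n k q)
          ∈ Ideal.span {f | ∃ i j : Fin n, i < j ∧ f = cycBinomial K n k i j} := by
        rcases lt_or_gt_of_ne hpq with hlt | hgt
        · exact Ideal.subset_span ⟨p, q, hlt, by rw [cycBinomial]⟩
        · have hmem : cycBinomial K n k q p
              ∈ Ideal.span {f | ∃ i j : Fin n, i < j ∧ f = cycBinomial K n k i j} :=
            Ideal.subset_span ⟨q, p, hgt, rfl⟩
          have heq : (oddProd K n k p * evenProd K n k q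
              - evenProd K n k p * oddProd K n k q) = -(cycBinomial K n k q p) := by
            rw [cycBinomial]; ring
          rw [heq]
          exact neg_mem hmem
      have hkey : MvPolynomial.monomial a (1 : K) - MvPolynomial.monomial b 1
          = MvPolynomial.monomial (a - (oddExp n k p + evenExp n k q)) 1 *
              (oddProd K n k p * evenProd K n k q - evenProd K n k p * oddProd K n k q)
            + (MvPolynomial.monomial ((a - (oddExp n k p + evenExp n k q))
                + (evenExp n k p + oddExp n k q)) 1 - MvPolynomial.monomial b 1) := by
        rw [oddProd_eq, oddProd_eq, evenProd_eq, evenProd_eq, MvPolynomial.monomial_mul,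
          MvPolynomial.monomial_mul, mul_sub, MvPolynomial.monomial_mul,
          MvPolynomial.monomial_mul, hc]
        simp only [one_mul, mul_one]
        exact (sub_add_sub_cancel _ _ _).symm
      rw [hkey]
      refine Ideal.add_mem _ (Ideal.mul_mem_left _ _ hg) (ih _ b hAa' ?_)
      simp only [Fin.zero_eta] at hM hDp hDq ⊢
      have hq_mem : q ∈ Finset.univ.erase p :=
        Finset.mem_erase.mpr ⟨Ne.symm hpq, Finset.mem_univ q⟩
      have hD' : ∀ i : Fin n,
          ((((a - (oddExp n k p + evenExp n k q)) + (evenExp n k p + oddExp n k q))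
              ⟨i, (0 : Fin (2 * k i + 1))⟩ : ℤ) - b ⟨i, (0 : Fin (2 * k i + 1))⟩)
            = ((a ⟨i, (0 : Fin (2 * k i + 1))⟩ : ℤ) - b ⟨i, (0 : Fin (2 * k i + 1))⟩)
              - (if i = p then 1 else 0) + (if i = q then 1 else 0) := by
        intro i
        simp only [Finsupp.add_apply, Finsupp.tsub_apply, oddExp_apply, evenExp_apply]
        norm_num
        by_cases hip : i = p
        · simp only [if_pos hip,
            if_neg (show ¬ i = q from fun hc => hpq (hip.symm.trans hc))]
          subst hip
          omega
        · by_cases hiq : i = q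
          · simp only [if_neg hip, if_pos hiq]
            subst hiq
            omega
          · simp only [if_neg hip, if_neg hiq]
            omega
      have hDp' := hD' p
      rw [if_pos rfl, if_neg hpq] at hDp'
      have hDq' := hD' q
      rw [if_neg (Ne.symm hpq), if_pos rfl] at hDq'
      have e1 := Finset.add_sum_erase Finset.univ
        (fun i : Fin n => ((((a - (oddExp n k p + evenExp n k q))
          + (evenExp n k p + oddExp n k q)) ⟨i, (0 : Fin (2 * k i + 1))⟩ : ℤ)
            - b ⟨i, (0 : Fin (2 * k i + 1))⟩).natAbs) (Finset.mem_univ p)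
      have e2 := Finset.add_sum_erase (Finset.univ.erase p)
        (fun i : Fin n => ((((a - (oddExp n k p + evenExp n k q))
          + (evenExp n k p + oddExp n k q)) ⟨i, (0 : Fin (2 * k i + 1))⟩ : ℤ)
            - b ⟨i, (0 : Fin (2 * k i + 1))⟩).natAbs) hq_mem
      have e3 := Finset.add_sum_erase Finset.univ
        (fun i : Fin n => ((a ⟨i, (0 : Fin (2 * k i + 1))⟩ : ℤ)
          - b ⟨i, (0 : Fin (2 * k i + 1))⟩).natAbs) (Finset.mem_univ p)
      have e4 := Finset.add_sum_erase (Finset.univ.erase p)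
        (fun i : Fin n => ((a ⟨i, (0 : Fin (2 * k i + 1))⟩ : ℤ)
          - b ⟨i, (0 : Fin (2 * k i + 1))⟩).natAbs) hq_mem
      have hrest : (∑ i ∈ (Finset.univ.erase p).erase q,
          ((((a - (oddExp n k p + evenExp n k q)) + (evenExp n k p + oddExp n k q))
            ⟨i, (0 : Fin (2 * k i + 1))⟩ : ℤ)
              - b ⟨i, (0 : Fin (2 * k i + 1))⟩).natAbs)
          = ∑ i ∈ (Finset.univ.erase p).erase q,
            ((a ⟨i, (0 : Fin (2 * k i + 1))⟩ : ℤ)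
              - b ⟨i, (0 : Fin (2 * k i + 1))⟩).natAbs := by
        refine Finset.sum_congr rfl fun i hi => ?_
        have hiq := (Finset.mem_erase.mp hi).1
        have hip := (Finset.mem_erase.mp (Finset.mem_erase.mp hi).2).1
        rw [hD' i, if_neg hip, if_neg hiq]
        omega
      omega

lemma ker_le_span :
    ∀ (N : ℕ) (f : MvPolynomial (Edg n k) K), f.support.card ≤ N → phi K n k f = 0 →
      f ∈ Ideal.span {f | ∃ i j : Fin n, i < j ∧ f = cycBinomial K n k i j} := by
  intro N
  induction N with
  | zero =>
      intro f hcard _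
      have hf : f = 0 := by
        rwa [Nat.le_zero, Finset.card_eq_zero, MvPolynomial.support_eq_empty] at hcard
      rw [hf]
      exact Ideal.zero_mem _
  | succ N ih =>
      intro f hcard hker
      by_cases hf0 : f = 0
      · rw [hf0]; exact Ideal.zero_mem _
      classical
      obtain ⟨u0, hu0⟩ := (MvPolynomial.support_nonempty (p := f)).mpr hf0
      set S := f.support.filter (fun u => Amap u = Amap u0) with hS
      have hu0S : u0 ∈ S := Finset.mem_filter.mpr ⟨hu0, rfl⟩
      have hsum : (∑ u ∈ S, MvPolynomial.coeff u f) = 0 := by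
        have h1 : MvPolynomial.coeff (Amap u0) (phi K n k f) = 0 := by
          rw [hker, MvPolynomial.coeff_zero]
        nth_rewrite 1 [MvPolynomial.as_sum f] at h1
        rw [map_sum] at h1
        simp_rw [phi_monomial] at h1
        rw [MvPolynomial.coeff_sum] at h1
        simp_rw [MvPolynomial.coeff_monomial] at h1
        rw [hS, Finset.sum_filter]
        exact h1
      set g : MvPolynomial (Edg n k) K := ∑ u ∈ S, MvPolynomial.C (MvPolynomial.coeff u f)
        * (MvPolynomial.monomial u 1 - MvPolynomial.monomial u0 1) with hg
      have hgJ : g ∈ Ideal.span {f | ∃ i j : Fin n, i < j ∧ f = cycBinomial K n k i j} := by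
        refine Ideal.sum_mem _ fun u hu => Ideal.mul_mem_left _ _ ?_
        have hA : Amap u = Amap u0 := (Finset.mem_filter.mp hu).2
        exact binom_mem K _ u u0 hA le_rfl
      have hgker : phi K n k g = 0 := by
        have := span_le_ker (n := n) (k := k) K hgJ
        rwa [RingHom.mem_ker] at this
      have hgval : g = ∑ u ∈ S, MvPolynomial.monomial u (MvPolynomial.coeff u f) := by
        rw [hg]
        have hterm : ∀ u ∈ S, MvPolynomial.C (MvPolynomial.coeff u f)
            * (MvPolynomial.monomial u 1 - MvPolynomial.monomial u0 (1 : K))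
              = MvPolynomial.monomial u (MvPolynomial.coeff u f)
                - MvPolynomial.monomial u0 (MvPolynomial.coeff u f) := by
          intro u _
          rw [mul_sub, MvPolynomial.C_mul_monomial, MvPolynomial.C_mul_monomial,
            mul_one (MvPolynomial.coeff u f)]
        rw [Finset.sum_congr rfl hterm, Finset.sum_sub_distrib]
        have h2 : (∑ u ∈ S, MvPolynomial.monomial u0 (MvPolynomial.coeff u f))
            = MvPolynomial.monomial u0 (∑ u ∈ S, MvPolynomial.coeff u f) :=
          (map_sum (MvPolynomial.monomial u0) _ _).symm
        rw [h2, hsum, map_zero, sub_zero]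
      have hcoeff : ∀ w, MvPolynomial.coeff w (f - g)
          = if w ∈ S then 0 else MvPolynomial.coeff w f := by
        intro w
        rw [MvPolynomial.coeff_sub, hgval, MvPolynomial.coeff_sum]
        simp_rw [MvPolynomial.coeff_monomial]
        rw [Finset.sum_ite_eq' S w (fun u => MvPolynomial.coeff u f)]
        by_cases hw : w ∈ S
        · rw [if_pos hw, if_pos hw, sub_self]
        · rw [if_neg hw, if_neg hw, sub_zero]
      have hsupp : (f - g).support ⊆ f.support \ S := by
        intro w hw
        rw [MvPolynomial.mem_support_iff, hcoeff w] at hw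
        by_cases hwS : w ∈ S
        · rw [if_pos hwS] at hw
          exact absurd rfl hw
        · rw [if_neg hwS] at hw
          exact Finset.mem_sdiff.mpr ⟨MvPolynomial.mem_support_iff.mpr hw, hwS⟩
      have hcard2 : (f - g).support.card ≤ N := by
        have h1 : (f - g).support.card ≤ (f.support \ S).card := Finset.card_le_card hsupp
        have h2 : (f.support \ S).card < f.support.card :=
          Finset.card_lt_card (Finset.sdiff_ssubset (Finset.filter_subset _ _) ⟨u0, hu0S⟩)
        omega
      have hker2 : phi K n k (f - g) = 0 := by
        rw [map_sub, hker, hgker, sub_self]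
      have hmem2 := ih (f - g) hcard2 hker2
      have hfeq : f = (f - g) + g := by ring
      rw [hfeq]
      exact Ideal.add_mem _ hmem2 hgJ

end Proof
end OddCycleComp


namespace OddCycleComp

/-- The toric ideal `I_{𝔤_n}` is generated by the binomials
`(∏_{s=0}^{k_i} x_{i,2s+1})(∏_{t=1}^{k_j} x_{j,2t})
 - (∏_{s=1}^{k_i} x_{i,2s})(∏_{t=0}^{k_j} x_{j,2t+1})` for `1 ≤ i < j ≤ n`. -/
theorem toricIdeal_eq_span_binomials
    (K : Type*) [Field K] (n : ℕ) (hn : 2 ≤ n) (k : Fin n → ℕ) (hk : ∀ i, 1 ≤ k i) :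
    toricIdeal K n k =
      Ideal.span {f | ∃ i j : Fin n, i < j ∧ f = cycBinomial K n k i j} := by
  apply le_antisymm
  · intro f hf
    have hker : phi K n k f = 0 := by
      rwa [toricIdeal, RingHom.mem_ker] at hf
    exact ker_le_span K f.support.card f le_rfl hker
  · intro f hf
    rw [toricIdeal]
    exact span_le_ker K hf

end OddCycleComp
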